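/- Let f : ℝ → ℝ be continuous and strictly concave on [a,b] with a < b. If c° ∈ (a,b) minimizes the function c ↦ max(E(a,c), E(c,b)) over (a,b), then the two subinterval errors are balanced at c°: E(a,c°) = E(c°,b). -/

import Mathlib

/-- The secant line of `f` through `(u, f u)` and `(v, f v)`. -/
noncomputable def secant (f : ℝ → ℝ) (u v : ℝ) (x : ℝ) : ℝ :=
  f u + ((f v - f u) / (v - u)) * (x - u)

/-- The maximum absolute error of the secant approximation of `f` on `[u, v]`:
`E(u,v) = sup_{x ∈ [u,v]} (f x - L_{u,v} x)`. -/
noncomputable def maxErr (f : ℝ → ℝ) (u v : ℝ) : ℝ :=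
  sSup ((fun x => f x - secant f u v x) '' Set.Icc u v)

open Set


lemma secant_left (f : ℝ → ℝ) (u v : ℝ) : secant f u v u = f u := by
  simp [secant]

lemma secant_right (f : ℝ → ℝ) {u v : ℝ} (h : u < v) : secant f u v v = f v := by
  have : v - u ≠ 0 := sub_ne_zero.mpr h.ne'
  rw [secant, div_mul_cancel₀ _ this]; ring

lemma secant_pivot_right (f : ℝ → ℝ) {u v : ℝ} (h : u < v) (x : ℝ) :
    secant f u v x = f v + ((f v - f u) / (v - u)) * (x - v) := by
  have hne : v - u ≠ 0 := sub_ne_zero.mpr h.ne'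
  rw [secant]
  field_simp
  ring

lemma secant_continuous (f : ℝ → ℝ) (u v : ℝ) : Continuous (secant f u v) := by
  unfold secant; fun_prop

lemma maxErr_spec (f : ℝ → ℝ) {u v : ℝ} (huv : u < v) (hf : ContinuousOn f (Icc u v)) :
    ∃ x ∈ Icc u v, maxErr f u v = f x - secant f u v x ∧
      ∀ y ∈ Icc u v, f y - secant f u v y ≤ f x - secant f u v x := by
  have hg : ContinuousOn (fun x => f x - secant f u v x) (Icc u v) :=
    hf.sub (secant_continuous f u v).continuousOn
  obtain ⟨x, hx, hmax⟩ := isCompact_Icc.exists_isMaxOn (nonempty_Icc.mpr huv.le) hg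
  refine ⟨x, hx, ?_, fun y hy => hmax hy⟩
  apply le_antisymm
  · exact csSup_le ((nonempty_Icc.mpr huv.le).image _)
      (by rintro z ⟨y, hy, rfl⟩; exact hmax hy)
  · exact le_csSup ⟨_, by rintro z ⟨y, hy, rfl⟩; exact hmax hy⟩ (mem_image_of_mem _ hx)

lemma le_maxErr (f : ℝ → ℝ) {u v : ℝ} (huv : u < v) (hf : ContinuousOn f (Icc u v))
    {y : ℝ} (hy : y ∈ Icc u v) : f y - secant f u v y ≤ maxErr f u v := by
  obtain ⟨x, hx, heq, hmax⟩ := maxErr_spec f huv hf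
  rw [heq]; exact hmax y hy

lemma secant_lt (f : ℝ → ℝ) {s : Set ℝ} (hconc : StrictConcaveOn ℝ s f)
    {u v w : ℝ} (hu : u ∈ s) (hw : w ∈ s) (huv : u < v) (hvw : v < w) :
    secant f u w v < f v := by
  have key := hconc.slope_anti_adjacent hu hw huv hvw
  rw [div_lt_div_iff₀ (by linarith) (by linarith)] at key
  have hwu : (0:ℝ) < w - u := by linarith
  have h2 : (f w - f u) * (v - u) < (f v - f u) * (w - u) := by nlinarith [key]
  have h3 : (f w - f u) / (w - u) * (v - u) < f v - f u := by
    rw [div_mul_eq_mul_div, div_lt_iff₀ hwu]; exact h2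
  rw [secant]; linarith

lemma maxErr_pos (f : ℝ → ℝ) {s : Set ℝ} (hconc : StrictConcaveOn ℝ s f)
    {u v : ℝ} (hu : u ∈ s) (hv : v ∈ s) (huv : u < v) (hf : ContinuousOn f (Icc u v)) :
    0 < maxErr f u v := by
  have hm : (u + v) / 2 ∈ Icc u v := ⟨by linarith, by linarith⟩
  have h1 := secant_lt f hconc hu hv (show u < (u + v) / 2 by linarith) (by linarith)
  have h2 := le_maxErr f huv hf hm
  linarith

lemma secant_ge_right (f : ℝ → ℝ) {s : Set ℝ} (hconc : ConcaveOn ℝ s f)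
    {u v x : ℝ} (hu : u ∈ s) (hx : x ∈ s) (huv : u < v) (hvx : v ≤ x) :
    f x ≤ secant f u v x := by
  rcases eq_or_lt_of_le hvx with rfl | h
  · rw [secant_right f huv]
  · have key := hconc.slope_anti_adjacent hu hx huv h
    rw [div_le_div_iff₀ (by linarith) (by linarith)] at key
    have hvu : (0:ℝ) < v - u := by linarith
    rw [secant, ← sub_le_iff_le_add', div_mul_eq_mul_div, le_div_iff₀ hvu]
    nlinarith [key]

lemma secant_ge_left (f : ℝ → ℝ) {s : Set ℝ} (hconc : ConcaveOn ℝ s f)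
    {u v x : ℝ} (hx : x ∈ s) (hv : v ∈ s) (hxu : x ≤ u) (huv : u < v) :
    f x ≤ secant f u v x := by
  rcases eq_or_lt_of_le hxu with rfl | h
  · rw [secant_left]
  · have key := hconc.slope_anti_adjacent hx hv h huv
    rw [div_le_div_iff₀ (by linarith) (by linarith)] at key
    have hvu : (0:ℝ) < v - u := by linarith
    rw [secant, ← sub_le_iff_le_add', div_mul_eq_mul_div, le_div_iff₀ hvu]
    nlinarith [key]

lemma slope_lt_left (f : ℝ → ℝ) {s : Set ℝ} (hconc : StrictConcaveOn ℝ s f)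
    {u v w : ℝ} (hu : u ∈ s) (hw : w ∈ s) (huv : u < v) (hvw : v < w) :
    (f w - f u) / (w - u) < (f v - f u) / (v - u) := by
  have key := hconc.slope_anti_adjacent hu hw huv hvw
  rw [div_lt_div_iff₀ (by linarith) (by linarith)] at key ⊢
  nlinarith [key]

lemma slope_lt_right (f : ℝ → ℝ) {s : Set ℝ} (hconc : StrictConcaveOn ℝ s f)
    {u v w : ℝ} (hu : u ∈ s) (hw : w ∈ s) (huv : u < v) (hvw : v < w) :
    (f w - f v) / (w - v) < (f w - f u) / (w - u) := by
  have key := hconc.slope_anti_adjacent hu hw huv hvw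
  rw [div_lt_div_iff₀ (by linarith) (by linarith)] at key ⊢
  nlinarith [key]

/-- Shrinking the interval on the right strictly decreases the error. -/
lemma maxErr_lt_of_lt_right (f : ℝ → ℝ) {s : Set ℝ} (hconc : StrictConcaveOn ℝ s f)
    {u v w : ℝ} (hu : u ∈ s) (hv : v ∈ s) (hw : w ∈ s)
    (huv : u < v) (hvw : v < w) (hf : ContinuousOn f (Icc u w)) :
    maxErr f u v < maxErr f u w := by
  have hsub : Icc u v ⊆ Icc u w := Icc_subset_Icc le_rfl hvw.le
  obtain ⟨x, hx, heq, _⟩ := maxErr_spec f huv (hf.mono hsub)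
  have hpos : 0 < maxErr f u v := maxErr_pos f hconc hu hv huv (hf.mono hsub)
  have hxu : u < x := by
    rcases eq_or_lt_of_le hx.1 with h | h
    · exfalso; rw [heq, ← h, secant_left] at hpos; simp at hpos
    · exact h
  have hslope := slope_lt_left f hconc hu hw huv hvw
  have hmul := mul_lt_mul_of_pos_right hslope (show (0:ℝ) < x - u by linarith)
  have hslt : secant f u w x < secant f u v x := by
    rw [secant, secant]; linarith
  have hle := le_maxErr f (huv.trans hvw) hf (show x ∈ Icc u w from ⟨hx.1, hx.2.trans hvw.le⟩)
  rw [heq]; linarith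

/-- Shrinking the interval on the left strictly decreases the error. -/
lemma maxErr_lt_of_lt_left (f : ℝ → ℝ) {s : Set ℝ} (hconc : StrictConcaveOn ℝ s f)
    {u v w : ℝ} (hu : u ∈ s) (hv : v ∈ s) (hw : w ∈ s)
    (huv : u < v) (hvw : v < w) (hf : ContinuousOn f (Icc u w)) :
    maxErr f v w < maxErr f u w := by
  have hsub : Icc v w ⊆ Icc u w := Icc_subset_Icc huv.le le_rfl
  obtain ⟨x, hx, heq, _⟩ := maxErr_spec f hvw (hf.mono hsub)
  have hpos : 0 < maxErr f v w := maxErr_pos f hconc hv hw hvw (hf.mono hsub)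
  have hxw : x < w := by
    rcases eq_or_lt_of_le hx.2 with h | h
    · exfalso; rw [heq, h, secant_right f hvw] at hpos; simp at hpos
    · exact h
  have hslope := slope_lt_right f hconc hu hw huv hvw
  have hmul := mul_lt_mul_of_neg_right hslope (show x - w < 0 by linarith)
  have hslt : secant f u w x < secant f v w x := by
    rw [secant_pivot_right f (huv.trans hvw), secant_pivot_right f hvw]; linarith
  have hle := le_maxErr f (huv.trans hvw) hf (show x ∈ Icc u w from ⟨huv.le.trans hx.1, hx.2⟩)
  rw [heq]; linarith

/-- At a minimizer of `c ↦ max (E a c) (E c b)` over `(a,b)`,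
the two subinterval errors are balanced. -/
theorem balanced_at_min (f : ℝ → ℝ) (a b : ℝ) (hab : a < b)
    (hf : ContinuousOn f (Set.Icc a b))
    (hconc : StrictConcaveOn ℝ (Set.Icc a b) f)
    (c₀ : ℝ) (hc₀ : c₀ ∈ Set.Ioo a b)
    (hmin : ∀ c ∈ Set.Ioo a b,
      max (maxErr f a c₀) (maxErr f c₀ b) ≤ max (maxErr f a c) (maxErr f c b)) :
    maxErr f a c₀ = maxErr f c₀ b := by
  obtain ⟨ha, hb⟩ := hc₀
  have hconc' := hconc.concaveOn
  have haI : a ∈ Icc a b := left_mem_Icc.mpr hab.le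
  have hbI : b ∈ Icc a b := right_mem_Icc.mpr hab.le
  have hcI : c₀ ∈ Icc a b := ⟨ha.le, hb.le⟩
  have hfc : ContinuousAt f c₀ := hf.continuousAt (Icc_mem_nhds ha hb)
  have hba : (0:ℝ) < b - a := by linarith
  by_contra hne
  rcases lt_or_gt_of_ne hne with hlt | hgt
  · -- E1 < E2 : move c slightly to the right of c₀
    set E1 := maxErr f a c₀ with hE1
    set E2 := maxErr f c₀ b with hE2
    set ε := E2 - E1 with hεdef
    have hε : 0 < ε := by simp [hεdef]; linarith
    set ε' := ε / (2 * (b - a)) with hε'def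
    have hε' : 0 < ε' := by positivity
    have hprod : ε' * (b - a) = ε / 2 := by
      rw [hε'def, div_mul_eq_mul_div, div_eq_div_iff (mul_pos two_pos hba).ne' two_ne_zero]; ring
    have hg : ContinuousAt (fun c => (f c - f a) / (c - a)) c₀ :=
      (hfc.sub continuousAt_const).div (continuousAt_id.sub continuousAt_const)
        (sub_ne_zero.mpr ha.ne')
    obtain ⟨δ, hδ, hball⟩ := Metric.continuousAt_iff.mp hg ε' hε'
    set c := min ((c₀ + b) / 2) (c₀ + δ / 2) with hc
    have hcc₀ : c₀ < c := lt_min (by linarith) (by linarith)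
    have hcb : c < b := (min_le_left _ _).trans_lt (by linarith)
    have hac : a < c := ha.trans hcc₀
    have hdist : dist c c₀ < δ := by
      rw [Real.dist_eq, abs_of_pos (by linarith)]
      have := min_le_right ((c₀ + b) / 2) (c₀ + δ / 2)
      linarith
    have hsl := hball hdist
    rw [Real.dist_eq] at hsl
    have hkey : (f c₀ - f a) / (c₀ - a) - (f c - f a) / (c - a) ≤ ε' := by
      have := (abs_le.mp hsl.le).1
      linarith
    have hE1nn : 0 ≤ E1 :=
      (maxErr_pos f hconc haI hcI ha (hf.mono (Icc_subset_Icc le_rfl hb.le))).le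
    have hEac : maxErr f a c ≤ E1 + ε / 2 := by
      apply csSup_le ((nonempty_Icc.mpr hac.le).image _)
      rintro z ⟨y, hy, rfl⟩
      have h1 : f y - secant f a c₀ y ≤ E1 := by
        rcases le_or_gt y c₀ with h | h
        · exact le_maxErr f ha (hf.mono (Icc_subset_Icc le_rfl hb.le)) ⟨hy.1, h⟩
        · have := secant_ge_right f hconc' haI
            (show y ∈ Icc a b from ⟨hy.1, hy.2.trans hcb.le⟩) ha h.le
          linarith
      have hya : 0 ≤ y - a := by linarith [hy.1]
      have hyb : y - a ≤ b - a := by linarith [hy.2, hcb]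
      have hm1 := mul_le_mul_of_nonneg_right hkey hya
      have hm2 := mul_le_mul_of_nonneg_left hyb hε'.le
      have h2 : secant f a c₀ y - secant f a c y ≤ ε / 2 := by
        rw [secant, secant]
        nlinarith [hm1, hm2, hprod]
      linarith
    have hEcb : maxErr f c b < E2 :=
      maxErr_lt_of_lt_left f hconc hcI ⟨hac.le, hcb.le⟩ hbI hcc₀ hcb
        (hf.mono (Icc_subset_Icc ha.le le_rfl))
    have hmin' := hmin c ⟨hac, hcb⟩
    rw [max_eq_right hlt.le] at hmin'
    have : max (maxErr f a c) (maxErr f c b) < E2 := max_lt (by linarith) hEcb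
    linarith
  · -- E2 < E1 : move c slightly to the left of c₀
    set E1 := maxErr f a c₀ with hE1
    set E2 := maxErr f c₀ b with hE2
    set ε := E1 - E2 with hεdef
    have hε : 0 < ε := by simp [hεdef]; linarith
    set ε' := ε / (2 * (b - a)) with hε'def
    have hε' : 0 < ε' := by positivity
    have hprod : ε' * (b - a) = ε / 2 := by
      rw [hε'def, div_mul_eq_mul_div, div_eq_div_iff (mul_pos two_pos hba).ne' two_ne_zero]; ring
    have hg : ContinuousAt (fun c => (f b - f c) / (b - c)) c₀ :=
      (continuousAt_const.sub hfc).div (continuousAt_const.sub continuousAt_id)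
        (sub_ne_zero.mpr hb.ne')
    obtain ⟨δ, hδ, hball⟩ := Metric.continuousAt_iff.mp hg ε' hε'
    set c := max ((a + c₀) / 2) (c₀ - δ / 2) with hc
    have hcc₀ : c < c₀ := max_lt (by linarith) (by linarith)
    have hac : a < c := lt_of_lt_of_le (by linarith) (le_max_left _ _)
    have hcb : c < b := hcc₀.trans hb
    have hdist : dist c c₀ < δ := by
      rw [Real.dist_eq, abs_of_neg (by linarith)]
      have := le_max_right ((a + c₀) / 2) (c₀ - δ / 2)
      linarith
    have hsl := hball hdist
    rw [Real.dist_eq] at hsl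
    have hkey : (f b - f c) / (b - c) - (f b - f c₀) / (b - c₀) ≤ ε' := by
      have := (abs_le.mp hsl.le).2
      linarith
    have hE2nn : 0 ≤ E2 :=
      (maxErr_pos f hconc hcI hbI hb (hf.mono (Icc_subset_Icc ha.le le_rfl))).le
    have hEcb : maxErr f c b ≤ E2 + ε / 2 := by
      apply csSup_le ((nonempty_Icc.mpr hcb.le).image _)
      rintro z ⟨y, hy, rfl⟩
      have h1 : f y - secant f c₀ b y ≤ E2 := by
        rcases le_or_gt c₀ y with h | h
        · exact le_maxErr f hb (hf.mono (Icc_subset_Icc ha.le le_rfl)) ⟨h, hy.2⟩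
        · have := secant_ge_left f hconc'
            (show y ∈ Icc a b from ⟨hac.le.trans hy.1, hy.2⟩) hbI h.le hb
          linarith
      have hyb : 0 ≤ b - y := by linarith [hy.2]
      have hya : b - y ≤ b - a := by linarith [hy.1, hac]
      have hm1 := mul_le_mul_of_nonneg_right hkey hyb
      have hm2 := mul_le_mul_of_nonneg_left hya hε'.le
      have h2 : secant f c₀ b y - secant f c b y ≤ ε / 2 := by
        rw [secant_pivot_right f hb, secant_pivot_right f hcb]
        nlinarith [hm1, hm2, hprod]
      linarith
    have hEac : maxErr f a c < E1 :=
      maxErr_lt_of_lt_right f hconc haI ⟨hac.le, hcb.le⟩ hcI hac hcc₀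
        (hf.mono (Icc_subset_Icc le_rfl hb.le))
    have hmin' := hmin c ⟨hac, hcb⟩
    rw [max_eq_left hgt.le] at hmin'
    have : max (maxErr f a c) (maxErr f c b) < E1 := max_lt hEac (by linarith)
    linarith
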